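/- arXiv:1302.3691 — 9 statements merged into one kernel-verified Lean document; each statement's English description precedes it below -/
import Mathlib

section
/- Let d ≥ 1 and χ be integers with χ < g(d), and let k, r be the unique integers with χ + d(d−3)/2 = kd + r and 0 ≤ r < d. Then every balanced spectrum v of type (d, χ) satisfies h⁰(v) ≤ (k+2)(k+1)/2 + max(0, k−d+r+2). -/
/-!
Let `m` be the number of nonnegative entries of the spectrum; they are its first `m` entries.
Since entries drop by at most one per step, if `m < d` the head lies below the staircase
`m - 1, m - 2, …, 0`, so `h⁰ ≤ m(m+1)/2`; if `m > 0` the tail lies above `-1, -2, …`, and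
`h⁰ = χ - Σ_{i ≥ m} (a_i + 1)` gives `h⁰ ≤ χ + (d-m)(d-m-1)/2`. The hypothesis `χ < g(d)`
forces `k ≤ d - 3`, and the right-hand side of the theorem is
`max ((k+1)(k+2)/2) (χ + (d-k-2)(d-k-3)/2)`: the first bound handles `m ≤ k + 1`, the second
`m ≥ k + 2`.
-/

open Finset

/-- A spectrum of type `(d, χ)`: a nonincreasing `d`-tuple of integers with
entry sum `χ - d`. -/
def IsSpectrum (d : ℕ) (χ : ℤ) (a : Fin d → ℤ) : Prop :=
  Antitone a ∧ ∑ i, a i = χ - (d : ℤ)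

/-- Balanced: consecutive entries drop by at most 1. -/
def IsBalanced {d : ℕ} (a : Fin d → ℤ) : Prop :=
  ∀ (i : Fin d) (h : (i : ℕ) + 1 < d), a i - a ⟨(i : ℕ) + 1, h⟩ ≤ 1

/-- `h⁰` of a spectrum: `Σ_{a_i ≥ 0} (a_i + 1)`. -/
def h0 {d : ℕ} (a : Fin d → ℤ) : ℤ :=
  ∑ i, if 0 ≤ a i then a i + 1 else 0

/-- Arithmetic genus of a degree `d` plane curve: `(d-1)(d-2)/2`. -/
def gd (d : ℤ) : ℤ := (d - 1) * (d - 2) / 2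

theorem Int.two_mul_mul_ediv_two_of_odd_sub {x y : ℤ} (h : Odd (x - y)) :
    2 * (x * y / 2) = x * y := by
  refine Int.two_mul_ediv_two_of_even ?_
  rw [Int.odd_sub] at h
  rw [Int.even_mul]
  rcases Int.even_or_odd y with hy | hy
  · exact Or.inr hy
  · exact Or.inl (Int.not_odd_iff_even.mp fun hx => Int.not_even_iff_odd.mpr hy (h.mp hx))

theorem two_mul_sum_range_sub (m : ℕ) :
    2 * ∑ i ∈ range m, ((m : ℤ) - i) = m * (m + 1) := by
  induction m with
  | zero => simp
  | succ m ih =>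
    rw [sum_range_succ']
    push_cast
    simp only [add_sub_add_right_eq_sub]
    linear_combination ih

theorem two_mul_sum_range_ite_lt {m n : ℕ} (hmn : m ≤ n) :
    2 * ∑ i ∈ range n, (if i < m then (m : ℤ) - i else 0) = m * (m + 1) := by
  induction n, hmn using Nat.le_induction with
  | base =>
    rw [sum_ite_of_true fun i hi => mem_range.mp hi, two_mul_sum_range_sub]
  | succ n hmn ih =>
    rw [sum_range_succ, if_neg (by omega), add_zero, ih]

theorem two_mul_sum_range_ite_le {m n : ℕ} (hmn : m ≤ n) :
    2 * ∑ i ∈ range n, (if m ≤ i then (i : ℤ) - m else 0) = (n - m) * (n - m - 1) := by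
  induction n, hmn using Nat.le_induction with
  | base =>
    rw [sum_ite_of_false fun i hi => by simpa using mem_range.mp hi]
    simp
  | succ n hmn ih =>
    rw [sum_range_succ, if_pos hmn, mul_add, ih]
    push_cast
    ring

theorem Antitone.exists_le_iff_lt {α : Type*} [Preorder α] {d : ℕ} {a : Fin d → α}
    (ha : Antitone a) (c : α) : ∃ m ≤ d, ∀ i, c ≤ a i ↔ (i : ℕ) < m := by
  classical
  have hex : ∃ n, ∀ i : Fin d, c ≤ a i → (i : ℕ) < n := ⟨d, fun i _ => i.isLt⟩
  refine ⟨Nat.find hex, Nat.find_min' hex fun i _ => i.isLt, fun i => ⟨Nat.find_spec hex i, ?_⟩⟩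
  intro hi
  by_contra hci
  refine Nat.find_min hex hi fun j hcj => ?_
  by_contra hij
  exact hci (hcj.trans (ha (not_lt.mp hij)))

namespace IsBalanced

variable {d : ℕ} {a : Fin d → ℤ}

theorem le_add_sub (hb : IsBalanced a) {i j : Fin d} (hij : i ≤ j) :
    a i ≤ a j + ((j : ℤ) - i) := by
  obtain ⟨i, hi⟩ := i
  obtain ⟨j, hj⟩ := j
  simp only [Fin.mk_le_mk] at hij ⊢
  induction j, hij using Nat.le_induction with
  | base => simp
  | succ j hij ih =>
    have hstep := hb ⟨j, by omega⟩ hj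
    specialize ih (by omega)
    push_cast at ih ⊢
    linarith

theorem two_mul_h0_le_of_lt (hb : IsBalanced a) {m : ℕ} (hm : ∀ i, 0 ≤ a i ↔ (i : ℕ) < m)
    (hmd : m < d) : 2 * h0 a ≤ m * (m + 1) := by
  have hneg : a ⟨m, hmd⟩ < 0 := not_le.mp fun h => lt_irrefl m ((hm _).mp h)
  have hle : h0 a ≤ ∑ i : Fin d, if (i : ℕ) < m then (m : ℤ) - i else 0 := by
    refine sum_le_sum fun i _ => ?_
    simp only [hm]
    split_ifs with hi
    · have := hb.le_add_sub (j := ⟨m, hmd⟩) (Fin.le_def.mpr hi.le)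
      simp only at this
      linarith
    · rfl
  rw [Fin.sum_univ_eq_sum_range (fun i => if i < m then (m : ℤ) - i else 0)] at hle
  linarith [two_mul_sum_range_ite_lt (n := d) hmd.le]

theorem two_mul_h0_le_of_pos (hb : IsBalanced a) {m : ℕ} (hm : ∀ i, 0 ≤ a i ↔ (i : ℕ) < m)
    (hm0 : 0 < m) (hmd : m ≤ d) :
    2 * h0 a ≤ 2 * (∑ i, a i + d) + (d - m) * (d - m - 1) := by
  have hlast : 0 ≤ a ⟨m - 1, by omega⟩ := (hm _).mpr (by simp; omega)
  have hle : h0 a ≤ ∑ i : Fin d, ((a i + 1) + if m ≤ (i : ℕ) then (i : ℤ) - m else 0) := by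
    refine sum_le_sum fun i _ => ?_
    simp only [hm]
    split_ifs with hi hi' hi'
    · omega
    · simp
    · have := hb.le_add_sub (i := ⟨m - 1, by omega⟩) (j := i) (Fin.le_def.mpr (by simp; omega))
      simp only at this
      push_cast [hm0] at this
      linarith
    · omega
  rw [sum_add_distrib, sum_add_distrib,
    Fin.sum_univ_eq_sum_range (fun i => if m ≤ i then (i : ℤ) - m else 0)] at hle
  simp only [sum_const, card_univ, Fintype.card_fin, nsmul_eq_mul, mul_one] at hle
  linarith [two_mul_sum_range_ite_le (n := d) hmd]

end IsBalanced

theorem stmt_1_general (d : ℕ) (χ k r : ℤ) (hd : 1 ≤ d) (hχ : χ < gd (d : ℤ))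
    (hkr : χ + (d : ℤ) * ((d : ℤ) - 3) / 2 = k * (d : ℤ) + r)
    (hr0 : 0 ≤ r)
    (a : Fin d → ℤ) (hs : IsSpectrum d χ a) (hb : IsBalanced a) :
    h0 a ≤ (k + 2) * (k + 1) / 2 + max 0 (k - (d : ℤ) + r + 2) := by
  have hkr2 : 2 * χ + d * (d - 3) = 2 * (k * d + r) := by
    rw [← Int.two_mul_mul_ediv_two_of_odd_sub (x := (d : ℤ)) ⟨1, by ring⟩, ← hkr]
    ring
  have hχ2 : 2 * χ < (d - 1) * (d - 2) := by
    rw [← Int.two_mul_mul_ediv_two_of_odd_sub (x := (d : ℤ) - 1) ⟨0, by ring⟩]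
    exact mul_lt_mul_of_pos_left hχ two_pos
  have hk : k ≤ d - 3 := by
    have hd' : (0 : ℤ) < d := by exact_mod_cast hd
    refine le_of_mul_le_mul_right ?_ hd'
    nlinarith
  suffices 2 * h0 a ≤ (k + 2) * (k + 1) + 2 * max 0 (k - d + r + 2) by
    have := Int.two_mul_mul_ediv_two_of_odd_sub (x := k + 2) (y := k + 1) ⟨0, by ring⟩
    omega
  obtain ⟨m, hmd, hm⟩ := hs.1.exists_le_iff_lt 0
  have hmax := le_max_left 0 (k - d + r + 2)
  rcases le_or_gt (m : ℤ) (k + 1) with hmk | hmk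
  · have := hb.two_mul_h0_le_of_lt hm (by omega)
    nlinarith [mul_nonneg (by omega : 0 ≤ k + 1 - m) (by omega : 0 ≤ k + 2 + m)]
  rcases Nat.eq_zero_or_pos m with rfl | hm0
  · have := hb.two_mul_h0_le_of_lt hm (by omega)
    push_cast at this hmk
    nlinarith [mul_nonneg_of_nonpos_of_nonpos (by omega : k + 2 ≤ 0) (by omega : k + 1 ≤ 0)]
  · have := hb.two_mul_h0_le_of_pos hm hm0 hmd
    rw [hs.2] at this
    nlinarith [le_max_right 0 (k - d + r + 2),
      mul_nonneg (by omega : 0 ≤ (m : ℤ) - k - 2) (by omega : 0 ≤ 2 * (d : ℤ) - m - k - 3)]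

/-- sharp upper bound on `h⁰` of a balanced spectrum when `χ < g(d)`. -/
theorem stmt_1 (d : ℕ) (χ k r : ℤ) (hd : 1 ≤ d) (hχ : χ < gd (d : ℤ))
    (hkr : χ + (d : ℤ) * ((d : ℤ) - 3) / 2 = k * (d : ℤ) + r)
    (hr0 : 0 ≤ r) (hrd : r < (d : ℤ))
    (a : Fin d → ℤ) (hs : IsSpectrum d χ a) (hb : IsBalanced a) :
    h0 a ≤ (k + 2) * (k + 1) / 2 + max 0 (k - (d : ℤ) + r + 2) :=
  stmt_1_general d χ k r hd hχ hkr hr0 a hs hb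
end

section
/- Let d ≥ 1 and χ be integers, and let k, r be the unique integers with χ + d(d−3)/2 = kd + r and 0 ≤ r < d. Then the deepest spectrum v(d,χ) is a balanced spectrum of type (d, χ) having at most one index j ∈ {1, …, d−1} with a_j = a_{j+1}. Moreover, if χ < g(d) and k ≥ −2, then h⁰(v(d,χ)) = (k+2)(k+1)/2 + max(0, k−d+r+2), so the upper bound of Theorem 1.1(2) is attained. -/
open Finset

/-- The deepest spectrum `v(d,χ)` (0-indexed): `a_i = k - i` for `i + 1 ≤ d - r`
and `a_i = k + 1 - i` otherwise. -/
def deepest (d : ℕ) (k r : ℤ) : Fin d → ℤ :=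
  fun i => if ((i : ℕ) : ℤ) + 1 ≤ (d : ℤ) - r then k - (i : ℕ) else k + 1 - (i : ℕ)

/-- There is at most one index `j` with `a_j = a_{j+1}`. -/
def AtMostOneRepeat {d : ℕ} (a : Fin d → ℤ) : Prop :=
  ∀ (i j : Fin d) (hi : (i : ℕ) + 1 < d) (hj : (j : ℕ) + 1 < d),
    a i = a ⟨(i : ℕ) + 1, hi⟩ → a j = a ⟨(j : ℕ) + 1, hj⟩ → i = j

/-! The entries of `v(d,χ)` are `k - i`, shifted up by one from the index `d - r` on; as a
multiset they are the run `k, k - 1, …, k - d + 2` with the one value `k - d + r + 1` repeated.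
Any sum over the entries is therefore a sum over this run plus one term, which gives both the
entry sum `χ - d` and `h⁰`. The latter is a triangular number because `χ < g(d)` forces
`k ≤ d - 3`, so the run contains all of `k, …, 0`. -/

lemma two_dvd_mul_sub_three (d : ℤ) : 2 ∣ d * (d - 3) := by
  have h : d * (d - 3) = (d - 3) * (d - 3 + 1) + 2 * (d - 3) := by ring
  rw [h]
  exact (even_iff_two_dvd.mp (Int.even_mul_succ_self _)).add (dvd_mul_right 2 _)

lemma gd_eq (d : ℤ) : gd d = d * (d - 3) / 2 + 1 := by
  have h : (d - 1) * (d - 2) = d * (d - 3) + 2 * 1 := by ring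
  rw [gd, h, Int.add_mul_ediv_left _ _ two_ne_zero]

lemma le_sub_three_of_lt_gd {d χ k r : ℤ} (hd : 0 < d) (hkr : χ + d * (d - 3) / 2 = k * d + r)
    (hr0 : 0 ≤ r) (hχ : χ < gd d) : k ≤ d - 3 := by
  rw [gd_eq] at hχ
  have := Int.ediv_mul_cancel (two_dvd_mul_sub_three d)
  exact le_of_mul_le_mul_right (by nlinarith) hd

lemma sum_range_natCast_mul_two (n : ℕ) : (∑ i ∈ range n, (i : ℤ)) * 2 = n * (n - 1) := by
  induction n with
  | zero => simp
  | succ n ih => rw [sum_range_succ, add_mul, ih]; push_cast; ring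

lemma sum_range_max_sub_mul_two (n : ℕ) (c : ℤ) (h1 : -1 ≤ c) (h2 : c ≤ n) :
    (∑ i ∈ range n, max (c - i) 0) * 2 = c * (c + 1) := by
  induction n generalizing c with
  | zero => interval_cases c <;> simp
  | succ n ih =>
    rcases le_or_gt c n with h | h
    · rw [sum_range_succ, max_eq_right (by omega), add_zero, ih c h1 h]
    · have hc : c = n + 1 := by push_cast at h2; omega
      have hshift : ∀ i ∈ range (n + 1), max (c - i) 0 = max (c - 1 - i) 0 + 1 := by
        intro i hi
        have := mem_range.mp hi
        rw [max_eq_left (by omega), max_eq_left (by omega)]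
        ring
      rw [sum_congr rfl hshift, sum_add_distrib, sum_range_succ, max_eq_right (by omega),
        sum_const, card_range, nsmul_one]
      have := ih (c - 1) (by omega) (by omega)
      push_cast
      linear_combination this - 2 * hc

lemma sum_range_succ_repeat {M : Type*} [AddCommMonoid M] (g : ℕ → M) {m n : ℕ} (hmn : m ≤ n) :
    ∑ i ∈ range (n + 1), g (if i ≤ m then i else i - 1) = ∑ i ∈ range n, g i + g m := by
  induction n, hmn using Nat.le_induction with
  | base =>
    rw [sum_range_succ, if_pos le_rfl]
    congr 1
    exact sum_congr rfl fun i hi => by rw [if_pos (mem_range.mp hi).le]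
  | succ n hmn ih =>
    rw [sum_range_succ, ih, if_neg (by omega), sum_range_succ, Nat.add_sub_cancel]
    abel

lemma h0_eq_sum_max {d : ℕ} (a : Fin d → ℤ) : h0 a = ∑ i, max (a i + 1) 0 :=
  sum_congr rfl fun i _ => by split_ifs <;> omega

section Deepest

variable {d : ℕ} {k r : ℤ}

lemma deepest_antitone : Antitone (deepest d k r) := by
  intro i j hij
  have : (i : ℕ) ≤ j := hij
  simp only [deepest]
  split_ifs <;> omega

lemma deepest_isBalanced : IsBalanced (deepest d k r) := by
  intro i h
  simp only [deepest]
  split_ifs <;> omega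

lemma deepest_atMostOneRepeat : AtMostOneRepeat (deepest d k r) := by
  intro i j hi hj hi' hj'
  simp only [deepest] at hi' hj'
  split_ifs at hi' hj' <;> exact Fin.ext (by omega)

lemma sum_comp_deepest {M : Type*} [AddCommMonoid M] (f : ℤ → M) (hr0 : 0 ≤ r) (hrd : r < d) :
    ∑ i, f (deepest d k r i) = ∑ j ∈ range (d - 1), f (k - j) + f (k - d + r + 1) := by
  obtain ⟨n, rfl⟩ : ∃ n, d = n + 1 := ⟨d - 1, by omega⟩
  obtain ⟨m, hm⟩ : ∃ m : ℕ, (m : ℤ) = n - r := ⟨(n - r).toNat, by omega⟩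
  have hmn : m ≤ n := by omega
  have hlast : k - ((n + 1 : ℕ) : ℤ) + r + 1 = k - m := by push_cast; omega
  rw [Nat.add_sub_cancel, hlast, ← sum_range_succ_repeat (fun j : ℕ => f (k - j)) hmn,
    ← Fin.sum_univ_eq_sum_range]
  refine sum_congr rfl fun i _ => congrArg f ?_
  simp only [deepest]
  split_ifs <;> omega

lemma deepest_isSpectrum {χ : ℤ} (hkr : χ + (d : ℤ) * ((d : ℤ) - 3) / 2 = k * d + r)
    (hr0 : 0 ≤ r) (hrd : r < d) : IsSpectrum d χ (deepest d k r) := by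
  refine ⟨deepest_antitone, ?_⟩
  have hd : 1 ≤ d := by omega
  have hsum := sum_comp_deepest (k := k) id hr0 hrd
  have hgauss := sum_range_natCast_mul_two (d - 1)
  have hdvd := Int.ediv_mul_cancel (two_dvd_mul_sub_three d)
  simp only [id, sum_sub_distrib, sum_const, card_range, nsmul_eq_mul] at hsum
  push_cast [Nat.cast_sub hd] at hsum hgauss
  rw [hsum]
  linarith

lemma h0_deepest (hk : -2 ≤ k) (hk3 : k ≤ d - 3) (hr0 : 0 ≤ r) (hrd : r < d) :
    h0 (deepest d k r) = (k + 2) * (k + 1) / 2 + max 0 (k - d + r + 2) := by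
  have htri : (∑ i ∈ range (d - 1), max (k + 1 - i) 0) * 2 = (k + 2) * (k + 1) := by
    rw [sum_range_max_sub_mul_two (d - 1) (k + 1) (by omega) (by omega)]
    ring
  rw [h0_eq_sum_max, sum_comp_deepest (fun x => max (x + 1) 0) hr0 hrd]
  simp only [sub_add_eq_add_sub]
  omega

end Deepest

theorem stmt_2_general (d : ℕ) (χ k r : ℤ)
    (hkr : χ + (d : ℤ) * ((d : ℤ) - 3) / 2 = k * (d : ℤ) + r)
    (hr0 : 0 ≤ r) (hrd : r < (d : ℤ)) :
    IsSpectrum d χ (deepest d k r) ∧ IsBalanced (deepest d k r) ∧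
    AtMostOneRepeat (deepest d k r) ∧
    (χ < gd (d : ℤ) → -2 ≤ k →
      h0 (deepest d k r) = (k + 2) * (k + 1) / 2 + max 0 (k - (d : ℤ) + r + 2)) :=
  ⟨deepest_isSpectrum hkr hr0 hrd, deepest_isBalanced, deepest_atMostOneRepeat,
    fun hχ hk => h0_deepest hk (le_sub_three_of_lt_gd (by omega) hkr hr0 hχ) hr0 hrd⟩

/-- the deepest spectrum is a balanced spectrum of type `(d, χ)` with
at most one repeated adjacent pair, and if `χ < g(d)` and `k ≥ -2` it attains the
bound of Theorem 1.1(2). -/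
theorem stmt_2 (d : ℕ) (χ k r : ℤ) (hd : 1 ≤ d)
    (hkr : χ + (d : ℤ) * ((d : ℤ) - 3) / 2 = k * (d : ℤ) + r)
    (hr0 : 0 ≤ r) (hrd : r < (d : ℤ)) :
    IsSpectrum d χ (deepest d k r) ∧ IsBalanced (deepest d k r) ∧
    AtMostOneRepeat (deepest d k r) ∧
    (χ < gd (d : ℤ) → -2 ≤ k →
      h0 (deepest d k r) = (k + 2) * (k + 1) / 2 + max 0 (k - (d : ℤ) + r + 2)) :=
  stmt_2_general d χ k r hkr hr0 hrd
end

section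
/- Let d ≥ 1 and χ be integers, and let v be a balanced spectrum of type (d, χ) such that there is at most one index j ∈ {1, …, d−1} with a_j = a_{j+1}. Then for every balanced spectrum w of type (d, χ), h⁰(w) ≤ h⁰(v); that is, v maximizes h⁰ among all balanced spectra of type (d, χ). -/
open Finset

/-!
The spectrum `a` is as steep as a nonincreasing sequence can be: over `j - i` steps it drops by
at least `j - i - 1`, while a balanced `w` drops by at most `j - i`. Hence `w` is majorized by
`a`: if `w` beat `a` on an initial segment, it would exceed `a` somewhere inside that segment and
fall below it somewhere after, forcing `w` to drop faster than balancedness allows. Since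
`{i | 0 ≤ w i}` is an initial segment, `h0 w = ∑_{0 ≤ w i} (w i + 1)` is at most the same sum
for `a`, which is at most `h0 a` since the summands of `h0 a` are nonnegative and dominate
`a i + 1`.
-/

section

variable {d : ℕ}

theorem sub_le_mul_of_forall_step_le {f : Fin d → ℤ} {c : ℤ} {i j : Fin d} (hij : i ≤ j)
    (hstep : ∀ (t : Fin d) (ht : (t : ℕ) + 1 < d), i ≤ t → t < j → f t - f ⟨t + 1, ht⟩ ≤ c) :
    f i - f j ≤ c * ((j : ℤ) - i) := by
  obtain ⟨n, hn⟩ := Nat.exists_eq_add_of_le (Fin.le_def.mp hij)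
  induction n generalizing j with
  | zero =>
    obtain rfl : i = j := Fin.ext hn.symm
    simp
  | succ n ih =>
    have hm : (i : ℕ) + n + 1 < d := by omega
    obtain rfl : j = ⟨i + n + 1, hm⟩ := Fin.ext hn
    have h1 := ih (j := ⟨i + n, by omega⟩) (Fin.le_def.mpr (by simp))
      (fun t ht hit htj => hstep t ht hit (htj.trans (Fin.lt_def.mpr (by simp)))) rfl
    have h2 := hstep ⟨i + n, by omega⟩ hm (Fin.le_def.mpr (by simp)) (Fin.lt_def.mpr (by simp))
    push_cast at h1 ⊢
    linarith

theorem IsBalanced.sub_le {w : Fin d → ℤ} (hw : IsBalanced w) {i j : Fin d} (hij : i ≤ j) :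
    w i - w j ≤ (j : ℤ) - i := by
  simpa using sub_le_mul_of_forall_step_le hij fun t ht _ _ => hw t ht

theorem Antitone.sub_le_sub_of_forall_ne {a : Fin d → ℤ} (ha : Antitone a) {i j : Fin d}
    (hij : i ≤ j)
    (hne : ∀ (t : Fin d) (ht : (t : ℕ) + 1 < d), i ≤ t → t < j → a t ≠ a ⟨t + 1, ht⟩) :
    (j : ℤ) - i ≤ a i - a j := by
  have := sub_le_mul_of_forall_step_le (f := -a) (c := -1) hij fun t ht hit htj => by
    have := ha (Fin.le_def.mpr (by simp) : t ≤ ⟨t + 1, ht⟩)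
    have := hne t ht hit htj
    simp only [Pi.neg_apply]
    omega
  simp only [Pi.neg_apply] at this
  linarith

theorem AtMostOneRepeat.sub_le_sub {a : Fin d → ℤ} (ha : Antitone a) (hone : AtMostOneRepeat a)
    {i j : Fin d} (hij : i ≤ j) : (j : ℤ) - i - 1 ≤ a i - a j := by
  by_cases hrep : ∃ (r : Fin d) (hr : (r : ℕ) + 1 < d), i ≤ r ∧ r < j ∧ a r = a ⟨r + 1, hr⟩
  · obtain ⟨r, hr, hir, hrj, hr_eq⟩ := hrep
    -- the unique repeat `r` splits `[i, j]` into two stretches where `a` strictly decreases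
    have hbefore := ha.sub_le_sub_of_forall_ne hir fun t ht _ htr ht_eq =>
      htr.ne (hone t r ht hr ht_eq hr_eq)
    have hafter := ha.sub_le_sub_of_forall_ne (i := ⟨r + 1, hr⟩) (j := j) (Fin.le_def.mpr hrj)
      fun t ht hrt _ ht_eq => by
        have := Fin.le_def.mp hrt
        have := hone t r ht hr ht_eq hr_eq
        simp_all
    simp only at hafter
    push_cast at hafter
    omega
  · push Not at hrep
    have := ha.sub_le_sub_of_forall_ne hij hrep
    omega

theorem sum_le_sum_of_isLowerSet {a w : Fin d → ℤ} (ha : Antitone a) (hone : AtMostOneRepeat a)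
    (hw : IsBalanced w) (hsum : ∑ i, w i = ∑ i, a i) {S : Finset (Fin d)}
    (hS : IsLowerSet (S : Set (Fin d))) : ∑ i ∈ S, w i ≤ ∑ i ∈ S, a i := by
  by_contra! hlt
  obtain ⟨i, hiS, hi⟩ := exists_lt_of_sum_lt hlt
  have hcompl : ∑ j ∈ Sᶜ, w j < ∑ j ∈ Sᶜ, a j := by
    rw [← sum_add_sum_compl S w, ← sum_add_sum_compl S a] at hsum
    linarith
  obtain ⟨j, hjS, hj⟩ := exists_lt_of_sum_lt hcompl
  have hij : i ≤ j := le_of_not_ge fun hji => mem_compl.mp hjS (hS hji hiS)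
  have := hw.sub_le hij
  have := hone.sub_le_sub ha hij
  omega

theorem sum_add_one_le_h0 (a : Fin d → ℤ) (S : Finset (Fin d)) : ∑ i ∈ S, (a i + 1) ≤ h0 a :=
  calc ∑ i ∈ S, (a i + 1) ≤ ∑ i ∈ S, (if 0 ≤ a i then a i + 1 else 0) :=
        sum_le_sum fun i _ => by split_ifs <;> omega
    _ ≤ h0 a := sum_le_sum_of_subset_of_nonneg (subset_univ S) fun i _ _ => by split_ifs <;> omega

theorem h0_eq_sum_filter (w : Fin d → ℤ) : h0 w = ∑ i with 0 ≤ w i, (w i + 1) :=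
  (sum_filter _ _).symm

end

theorem stmt_4_general (d : ℕ) (χ : ℤ) (a : Fin d → ℤ)
    (hs : IsSpectrum d χ a) (hone : AtMostOneRepeat a) :
    ∀ w : Fin d → ℤ, IsSpectrum d χ w → IsBalanced w → h0 w ≤ h0 a := by
  intro w ⟨hw_anti, hw_sum⟩ hbw
  set S : Finset (Fin d) := {i | 0 ≤ w i}
  have hS : IsLowerSet (S : Set (Fin d)) := fun i j hji hi => by
    simp only [S, coe_filter, Set.mem_ofPred_eq, mem_univ, true_and] at hi ⊢
    exact hi.trans (hw_anti hji)
  have hmaj := sum_le_sum_of_isLowerSet hs.1 hone hbw (hw_sum.trans hs.2.symm) hS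
  calc h0 w = ∑ i ∈ S, (w i + 1) := h0_eq_sum_filter w
    _ ≤ ∑ i ∈ S, (a i + 1) := by simp only [sum_add_distrib]; linarith
    _ ≤ h0 a := sum_add_one_le_h0 a S

/-- Lemma 2.5: a balanced spectrum with at most one repeated
adjacent pair maximizes `h⁰` among all balanced spectra of type `(d, χ)`. -/
theorem stmt_4 (d : ℕ) (χ : ℤ) (hd : 1 ≤ d) (a : Fin d → ℤ)
    (hs : IsSpectrum d χ a) (hb : IsBalanced a) (hone : AtMostOneRepeat a) :
    ∀ w : Fin d → ℤ, IsSpectrum d χ w → IsBalanced w → h0 w ≤ h0 a :=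
  stmt_4_general d χ a hs hone
end

section
/- Let d ≥ 3 and χ be integers with 1 − g(d) ≤ χ ≤ g(d) − 1, and let k, r be the unique integers with χ + d(d−3)/2 = kd + r and 0 ≤ r < d. Then (k+2)(k+1) + 2·max(0, k−d+r+2) ≤ 2 + χ + d(d−3)/2; equivalently, β(d,χ) ≤ γ(d,χ) as rational numbers. -/
open Finset

/-- the numerical inequality `β(d,χ) ≤ γ(d,χ)`, in the equivalent
integral form `(k+2)(k+1) + 2 max(0, k-d+r+2) ≤ 2 + χ + d(d-3)/2`. -/
theorem stmt_9 (d χ k r : ℤ) (hd : 3 ≤ d)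
    (h1 : 1 - gd d ≤ χ) (h2 : χ ≤ gd d - 1)
    (hkr : χ + d * (d - 3) / 2 = k * d + r) (hr0 : 0 ≤ r) (hrd : r < d) :
    (k + 2) * (k + 1) + 2 * max 0 (k - d + r + 2) ≤ 2 + χ + d * (d - 3) / 2 := by
  obtain ⟨c, hc⟩ := Int.even_mul_succ_self (d - 2)
  have hc2 : (d - 1) * (d - 2) = 2 * c := by ring_nf; ring_nf at hc; omega
  have hgd : gd d = c := by
    unfold gd; rw [hc2]; exact Int.mul_ediv_cancel_left c (by norm_num)
  have hdd : d * (d - 3) = 2 * (c - 1) := by nlinarith [hc2]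
  have hdd2 : d * (d - 3) / 2 = c - 1 := by
    rw [hdd]; exact Int.mul_ediv_cancel_left _ (by norm_num)
  rw [hgd] at h1 h2
  rw [hdd2] at hkr ⊢
  -- bounds on k*d + r
  have hN0 : 0 ≤ k * d + r := by omega
  have hN1 : k * d + r ≤ d * (d - 3) := by nlinarith
  have hk0 : 0 ≤ k := by nlinarith
  have hk1 : k ≤ d - 3 := by nlinarith
  rcases le_or_gt (k - d + r + 2) 0 with hc1 | hc1
  · rw [max_eq_left hc1]
    nlinarith [mul_nonneg hk0 (by omega : (0:ℤ) ≤ d - 3 - k)]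
  · rw [max_eq_right (le_of_lt hc1)]
    have hk2 : k ≤ d - 4 := by
      rcases lt_or_eq_of_le hk1 with h | h
      · omega
      · exfalso; nlinarith
    nlinarith [mul_nonneg (by omega : (0:ℤ) ≤ k + 1) (by omega : (0:ℤ) ≤ d - 4 - k)]
end

section
/- Let d ≥ 3 and χ be integers with 1 − g(d) ≤ χ ≤ g(d) − 2. For each integer χ′ let k(χ′) and r(χ′) be the unique integers with χ′ + d(d−3)/2 = k(χ′)·d + r(χ′) and 0 ≤ r(χ′) < d. Then 2 · #{χ′ : χ ≤ χ′ ≤ g(d) − 2 and k(χ′) + r(χ′) ≥ d − 2} ≥ g(d) − 1 − χ, with equality if and only if χ = 1 − g(d). -/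
open Finset

/-- The quotient `k(χ)` in `χ + d(d-3)/2 = k d + r`, `0 ≤ r < d`. -/
def kk (d χ : ℤ) : ℤ := (χ + d * (d - 3) / 2) / d

/-- The remainder `r(χ)` in `χ + d(d-3)/2 = k d + r`, `0 ≤ r < d`. -/
def rr (d χ : ℤ) : ℤ := (χ + d * (d - 3) / 2) % d

/-- The sharp bound `β(d,χ) = (k+2)(k+1)/2 + max(0, k - d + r + 2)`. -/
def betaB (d χ : ℤ) : ℤ :=
  (kk d χ + 2) * (kk d χ + 1) / 2 + max 0 (kk d χ - d + rr d χ + 2)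

lemma two_gd (d : ℤ) : 2 * gd d = (d - 1) * (d - 2) := by
  have he : ((d - 1) * (d - 2)) % 2 = 0 := by
    rcases (by omega : (d - 1) % 2 = 0 ∨ (d - 2) % 2 = 0) with h | h <;>
      rw [Int.mul_emod, h] <;> simp
  exact Int.two_mul_ediv_two_of_even (Int.even_iff.mpr he)

lemma two_dd (d : ℤ) : 2 * (d * (d - 3) / 2) = d * (d - 3) := by
  have he : (d * (d - 3)) % 2 = 0 := by
    rcases (by omega : d % 2 = 0 ∨ (d - 3) % 2 = 0) with h | h <;>
      rw [Int.mul_emod, h] <;> simp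
  exact Int.two_mul_ediv_two_of_even (Int.even_iff.mpr he)

lemma icc_ins (a b : ℤ) (h : a ≤ b) :
    Finset.Icc a b = insert a (Finset.Icc (a+1) b) := by
  ext x; simp only [Finset.mem_Icc, Finset.mem_insert]; omega

lemma key (d : ℤ) (hd : 4 ≤ d) :
    ∀ n : ℕ, (n : ℤ) ≤ 2 * (d * (d - 3) / 2) → ∀ a : ℤ, a = gd d - 1 - n →
    2 * (((Finset.Icc a (gd d - 2)).filter
        (fun χ' => d - 2 ≤ kk d χ' + rr d χ')).card : ℤ) - (gd d - 1 - a)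
    = kk d a * (d - 3 - kk d a) + min (rr d a) (d - 2 - kk d a)
        - max 0 (rr d a - (d - 2 - kk d a)) := by
  have hg := two_gd d
  have hD := two_dd d
  have hr : (d - 1) * (d - 2) = d * (d - 3) + 2 := by ring
  have hgE : gd d - 1 = d * (d - 3) / 2 := by linarith
  intro n
  induction n with
  | zero =>
    intro _ a ha
    have ha' : a = gd d - 1 := by rw [ha]; push_cast; ring
    have hmv : a + d * (d - 3) / 2 = d * (d - 3) + 0 := by
      rw [ha']; linarith
    have hch := (Int.ediv_emod_unique (a := a + d * (d - 3) / 2)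
      (b := d) (q := d - 3) (r := 0) (by omega)).mpr ⟨by linarith, le_refl 0, by omega⟩
    have hk : kk d a = d - 3 := hch.1
    have hrr : rr d a = 0 := hch.2
    have hempty : Finset.Icc a (gd d - 2) = ∅ := Finset.Icc_eq_empty (by omega)
    rw [hempty, hk, hrr]
    simp only [Finset.filter_empty, Finset.card_empty, Nat.cast_zero, mul_zero]
    have h1 : min (0:ℤ) (d - 2 - (d - 3)) = 0 := min_eq_left (by omega)
    have h2 : max (0:ℤ) (0 - (d - 2 - (d - 3))) = 0 := max_eq_left (by omega)
    rw [h1, h2, ha']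
    ring
  | succ n ih =>
    intro hn a ha
    have hn' : (n : ℤ) ≤ 2 * (d * (d - 3) / 2) := by push_cast at hn ⊢; omega
    set b := a + 1 with hb
    have hab : a = gd d - 2 - n := by rw [ha]; push_cast; ring
    have hble : b = gd d - 1 - n := by omega
    have hIH := ih hn' b hble
    -- facts about K, R at a
    set K := kk d a with hK
    set R := rr d a with hR
    have hKR : d * K + R = a + d * (d - 3) / 2 := Int.mul_ediv_add_emod _ _
    have hR0 : 0 ≤ R := Int.emod_nonneg _ (by omega)
    have hR1 : R < d := Int.emod_lt_of_pos _ (by omega)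
    have hm0 : 0 ≤ a + d * (d - 3) / 2 := by omega
    have hm1 : a + d * (d - 3) / 2 ≤ d * (d - 3) - 1 := by omega
    have hK0 : 0 ≤ K := by nlinarith
    have hK4 : K ≤ d - 4 := by nlinarith
    -- split the interval
    have hsplit : Finset.Icc a (gd d - 2) = insert a (Finset.Icc b (gd d - 2)) :=
      icc_ins _ _ (by omega)
    rw [hsplit, Finset.filter_insert]
    rcases (by omega : R = d - 1 ∨ R < d - 1) with hRd | hRd
    · -- rr d a = d - 1 : predicate holds at a, (K', R') = (K+1, 0)
      have hch := (Int.ediv_emod_unique (a := b + d * (d - 3) / 2)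
        (b := d) (q := K + 1) (r := 0) (by omega)).mpr ⟨by linarith, le_refl 0, by omega⟩
      have hkb : kk d b = K + 1 := hch.1
      have hrb : rr d b = 0 := hch.2
      rw [hkb, hrb] at hIH
      have hmin1 : min (0:ℤ) (d - 2 - (K + 1)) = 0 := min_eq_left (by omega)
      have hmax1 : max (0:ℤ) (0 - (d - 2 - (K + 1))) = 0 := max_eq_left (by omega)
      rw [hmin1, hmax1] at hIH
      have hP : d - 2 ≤ kk d a + rr d a := by omega
      rw [if_pos hP]
      rw [Finset.card_insert_of_notMem (by simp [Finset.mem_Icc]; omega)]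
      have hmin2 : min R (d - 2 - K) = d - 2 - K := min_eq_right (by omega)
      have hmax2 : max (0:ℤ) (R - (d - 2 - K)) = R - (d - 2 - K) := max_eq_right (by omega)
      rw [hmin2, hmax2]
      have hring : K * (d - 3 - K) + (d - 2 - K) - ((d-1) - (d - 2 - K))
          = (K + 1) * (d - 3 - (K + 1)) + 0 - 0 + 1 := by ring
      push_cast
      rw [hRd]
      linarith [hIH, hring]
    · -- rr d a < d - 1 : (K', R') = (K, R+1)
      have hch := (Int.ediv_emod_unique (a := b + d * (d - 3) / 2)
        (b := d) (q := K) (r := R + 1) (by omega)).mpr ⟨by linarith, by omega, by omega⟩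
      have hkb : kk d b = K := hch.1
      have hrb : rr d b = R + 1 := hch.2
      rw [hkb, hrb] at hIH
      rcases le_or_gt (d - 2 - K) R with hc | hc
      · -- predicate holds at a
        have hP : d - 2 ≤ kk d a + rr d a := by omega
        rw [if_pos hP]
        rw [Finset.card_insert_of_notMem (by simp [Finset.mem_Icc]; omega)]
        have e1 : min (R + 1) (d - 2 - K) = d - 2 - K := min_eq_right (by omega)
        have e2 : max (0:ℤ) (R + 1 - (d - 2 - K)) = R + 1 - (d - 2 - K) :=
          max_eq_right (by omega)
        have e3 : min R (d - 2 - K) = d - 2 - K := min_eq_right (by omega)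
        have e4 : max (0:ℤ) (R - (d - 2 - K)) = R - (d - 2 - K) := max_eq_right (by omega)
        rw [e1, e2] at hIH
        rw [e3, e4]
        push_cast
        linarith [hIH]
      · -- predicate fails at a
        have hP : ¬ (d - 2 ≤ kk d a + rr d a) := by omega
        rw [if_neg hP]
        have e1 : min (R + 1) (d - 2 - K) = R + 1 := min_eq_left (by omega)
        have e2 : max (0:ℤ) (R + 1 - (d - 2 - K)) = 0 := max_eq_left (by omega)
        have e3 : min R (d - 2 - K) = R := min_eq_left (by omega)
        have e4 : max (0:ℤ) (R - (d - 2 - K)) = 0 := max_eq_left (by omega)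
        rw [e1, e2] at hIH
        rw [e3, e4]
        linarith [hIH]

/-- at least half of the `χ'` with `χ ≤ χ' < g(d) - 1` satisfy
`k(χ') + r(χ') ≥ d - 2`, with exactly half if and only if `χ = 1 - g(d)`. -/
theorem stmt_11 (d χ : ℤ) (hd : 3 ≤ d)
    (h1 : 1 - gd d ≤ χ) (h2 : χ ≤ gd d - 2) :
    gd d - 1 - χ ≤
      2 * (((Finset.Icc χ (gd d - 2)).filter
        (fun χ' => d - 2 ≤ kk d χ' + rr d χ')).card : ℤ) ∧
    (2 * (((Finset.Icc χ (gd d - 2)).filter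
        (fun χ' => d - 2 ≤ kk d χ' + rr d χ')).card : ℤ) = gd d - 1 - χ ↔
      χ = 1 - gd d) := by
  have hg := two_gd d
  have hD := two_dd d
  have hrng : (d - 1) * (d - 2) = d * (d - 3) + 2 := by ring
  have hgE : gd d - 1 = d * (d - 3) / 2 := by linarith
  have hd4 : 4 ≤ d := by
    by_contra h
    have hd3 : d = 3 := by omega
    subst hd3
    norm_num [gd] at h1 h2
    omega
  have hcnt : (((gd d - 1 - χ).toNat : ℤ)) = gd d - 1 - χ :=
    Int.toNat_of_nonneg (by omega)
  have hkey := key d hd4 (gd d - 1 - χ).toNat (by omega) χ (by omega)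
  set K := kk d χ with hK
  set R := rr d χ with hR
  have hKR : d * K + R = χ + d * (d - 3) / 2 := Int.mul_ediv_add_emod _ _
  have hR0 : 0 ≤ R := Int.emod_nonneg _ (by omega)
  have hR1 : R < d := Int.emod_lt_of_pos _ (by omega)
  have hm0 : 0 ≤ χ + d * (d - 3) / 2 := by omega
  have hm1 : χ + d * (d - 3) / 2 ≤ d * (d - 3) - 1 := by omega
  have hK0 : 0 ≤ K := by nlinarith
  have hK4 : K ≤ d - 4 := by nlinarith
  -- χ = 1 - gd d ↔ d*K + R = 0 ↔ (K = 0 ∧ R = 0)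
  have hchi : χ = 1 - gd d ↔ (K = 0 ∧ R = 0) := by
    constructor
    · intro h
      have hm : d * K + R = 0 := by omega
      have hdk : 0 ≤ d * K := mul_nonneg (by omega) hK0
      have hR0' : R = 0 := by omega
      have hK0' : K = 0 := by
        rcases mul_eq_zero.mp (by omega : d * K = 0) with h' | h' <;> omega
      exact ⟨hK0', hR0'⟩
    · rintro ⟨hk, hr⟩
      rw [hk, hr] at hKR
      omega
  rcases le_or_gt R (d - 2 - K) with hc | hc
  · have e3 : min R (d - 2 - K) = R := min_eq_left hc
    have e4 : max (0:ℤ) (R - (d - 2 - K)) = 0 := max_eq_left (by omega)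
    rw [e3, e4] at hkey
    have hp : 0 ≤ K * (d - 3 - K) := mul_nonneg hK0 (by omega)
    constructor
    · linarith
    · constructor
      · intro h
        have hz : K * (d - 3 - K) + R = 0 := by linarith
        have hKz : K * (d - 3 - K) = 0 := by linarith
        have hK0' : K = 0 := by
          rcases mul_eq_zero.mp hKz with h' | h' <;> omega
        exact hchi.mpr ⟨hK0', by linarith⟩
      · intro h
        obtain ⟨hk0, hr0⟩ := hchi.mp h
        rw [hk0, hr0] at hkey
        linarith [hkey]
  · have e3 : min R (d - 2 - K) = d - 2 - K := min_eq_right (by omega)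
    have e4 : max (0:ℤ) (R - (d - 2 - K)) = R - (d - 2 - K) := max_eq_right (by omega)
    rw [e3, e4] at hkey
    have hp : 0 ≤ (K + 1) * (d - 4 - K) := mul_nonneg (by omega) (by omega)
    have hone : 1 ≤ K * (d - 3 - K) + (d - 2 - K) - (R - (d - 2 - K)) := by nlinarith
    constructor
    · linarith
    · constructor
      · intro h; linarith
      · intro h
        obtain ⟨hk0, hr0⟩ := hchi.mp h
        omega
end

section
/- Let d ≥ 3 and χ be integers with 1 − g(d) ≤ χ ≤ g(d) − 1. For each integer χ′ let k(χ′) and r(χ′) be the unique integers with χ′ + d(d−3)/2 = k(χ′)·d + r(χ′) and 0 ≤ r(χ′) < d. Then β(d, χ) = β(d, g(d)−1) − #{χ′ : χ ≤ χ′ ≤ g(d) − 2 and k(χ′) + r(χ′) ≥ d − 2}. -/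
open Finset

/-!
Write `n = χ + d(d-3)/2 = k d + r`. Moving from `χ` to `χ + 1` either raises `r` by one,
which raises the `max` term by one exactly when `k + r ≥ d - 2`, or (when `r = d - 1`) wraps
to `(k + 1, 0)`, where the gain `k + 2` of the triangular term is cancelled by the loss
`k + 1` of the `max` term as long as `k ≤ d - 3`. So `β(d, ·)` grows by the indicator of
`k + r ≥ d - 2` at each step, and the formula telescopes. On `1 - g ≤ χ ≤ g - 2` one has
`0 ≤ n < d(d-3)`, hence `k ≤ d - 3`.
-/

lemma eq_sub_card_filter_Ico_of_add_one {f : ℤ → ℤ} {p : ℤ → Prop} [DecidablePred p]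
    {a b : ℤ} (hab : a ≤ b) (hf : ∀ x ∈ Ico a b, f (x + 1) = f x + if p x then 1 else 0) :
    f a = f b - (#{x ∈ Ico a b | p x} : ℤ) := by
  induction b, hab using Int.leInduction with
  | base => simp
  | succ b hab ih =>
    have hIco : Ico a (b + 1) = insert b (Ico a b) := by
      rw [Ico_add_one_right_eq_Icc, Ico_insert_right hab]
    have ih := ih fun x hx => hf x (Ico_subset_Ico_right (by omega) hx)
    rw [hIco, card_filter, sum_insert (by simp), ← card_filter, hf b (by simp [hab])]
    push_cast
    linarith

lemma rr_add_mul_kk (d χ : ℤ) : rr d χ + d * kk d χ = χ + d * (d - 3) / 2 :=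
  Int.emod_add_mul_ediv _ _

lemma rr_nonneg {d : ℤ} (χ : ℤ) (hd : 0 < d) : 0 ≤ rr d χ := Int.emod_nonneg _ hd.ne'

lemma rr_lt {d : ℤ} (χ : ℤ) (hd : 0 < d) : rr d χ < d := Int.emod_lt_of_pos _ hd

lemma kk_nonneg {d χ : ℤ} (hd : 0 < d) (h : 0 ≤ χ + d * (d - 3) / 2) : 0 ≤ kk d χ :=
  Int.ediv_nonneg h hd.le

lemma kk_le_of_lt {d χ : ℤ} (hd : 0 < d) (h : χ + d * (d - 3) / 2 < d * (d - 3)) :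
    kk d χ ≤ d - 3 :=
  Int.lt_add_one_iff.1 <| Int.ediv_lt_of_lt_mul hd (by linarith)

lemma kk_eq_and_rr_eq {d χ k r : ℤ} (hd : 0 < d) (hr₀ : 0 ≤ r) (hr : r < d)
    (h : r + d * k = χ + d * (d - 3) / 2) : kk d χ = k ∧ rr d χ = r :=
  (Int.ediv_emod_unique hd).2 ⟨h, hr₀, hr⟩

lemma kk_add_one_of_rr_lt {d χ : ℤ} (hd : 0 < d) (h : rr d χ < d - 1) :
    kk d (χ + 1) = kk d χ ∧ rr d (χ + 1) = rr d χ + 1 :=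
  kk_eq_and_rr_eq hd (by linarith [rr_nonneg χ hd]) (by omega)
    (by linarith [rr_add_mul_kk d χ])

lemma kk_add_one_of_rr_eq {d χ : ℤ} (hd : 0 < d) (h : rr d χ = d - 1) :
    kk d (χ + 1) = kk d χ + 1 ∧ rr d (χ + 1) = 0 :=
  kk_eq_and_rr_eq hd le_rfl hd (by linarith [rr_add_mul_kk d χ])

lemma triangle_add_one (k : ℤ) :
    (k + 1 + 2) * (k + 1 + 1) / 2 = (k + 2) * (k + 1) / 2 + (k + 2) := by
  rw [← Int.add_mul_ediv_right _ _ two_ne_zero]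
  ring_nf

lemma betaB_add_one {d χ : ℤ} (hd : 0 < d) (hk₀ : -2 ≤ kk d χ) (hk : kk d χ ≤ d - 3) :
    betaB d (χ + 1) = betaB d χ + if d - 2 ≤ kk d χ + rr d χ then 1 else 0 := by
  rcases lt_or_eq_of_le (Int.le_sub_one_of_lt (rr_lt χ hd)) with hr | hr
  · obtain ⟨hk1, hr1⟩ := kk_add_one_of_rr_lt hd hr
    rw [betaB, betaB, hk1, hr1]
    split_ifs <;> omega
  · obtain ⟨hk1, hr1⟩ := kk_add_one_of_rr_eq hd hr
    rw [betaB, betaB, hk1, hr1, triangle_add_one]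
    split_ifs <;> omega

/-- the difference formula
`β(d,χ) = β(d, g-1) - #{χ' : χ ≤ χ' ≤ g - 2, k(χ') + r(χ') ≥ d - 2}`. -/
theorem stmt_12 (d χ : ℤ) (hd : 3 ≤ d)
    (h1 : 1 - gd d ≤ χ) (h2 : χ ≤ gd d - 1) :
    betaB d χ = betaB d (gd d - 1) -
      (((Finset.Icc χ (gd d - 2)).filter
        (fun χ' => d - 2 ≤ kk d χ' + rr d χ')).card : ℤ) := by
  have hg := gd_eq d
  rw [show gd d - 2 = gd d - 1 - 1 by ring, ← Ico_add_one_right_eq_Icc, sub_add_cancel]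
  refine eq_sub_card_filter_Ico_of_add_one h2 fun x hx => ?_
  rw [mem_Ico] at hx
  have hn₀ : 0 ≤ x + d * (d - 3) / 2 := by omega
  have hn : x + d * (d - 3) / 2 < d * (d - 3) := by omega
  exact betaB_add_one (by omega) (by linarith [kk_nonneg (by omega) hn₀])
    (kk_le_of_lt (by omega) hn)
end

section
/- Let d ≥ 1 and χ be integers with χ ≥ 1 − g(d), and let v = (a_1, …, a_d) be a balanced spectrum of type (d, χ) such that a_i ≤ −2 for some i. Then 2·h⁰(v) ≤ 2 + χ + d(d−3)/2. -/
/-!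
Let `k` be an index with `a_k = -1`. It exists because the entries drop by at most one and run
from `≥ 0` (otherwise `h⁰ = 0` and the bound is `χ ≥ 1 - g(d)`) to `≤ -2`, and it is neither
the first nor the last index. Balancedness and monotonicity make `a` one-Lipschitz, so
`|a_i + 1| ≤ |i - k|`. Since `2 h⁰(v) = Σ (a_i + 1) + Σ |a_i + 1| = χ + Σ |a_i + 1|`, it remains
to bound `Σ_i |i - k|`, a convex function of `k` which on `1 ≤ k ≤ d - 2` is largest at the
endpoints, where it equals `1 + g(d)`.
-/

open Finset

lemma two_mul_gd (n : ℤ) : 2 * gd n = (n - 1) * (n - 2) := by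
  have h := (Int.even_mul_pred_self (n - 1)).two_dvd
  rw [show n - 1 - 1 = n - 2 by ring] at h
  rw [gd, Int.mul_ediv_cancel' h]

lemma mul_sub_three_ediv_two (n : ℤ) : n * (n - 3) / 2 = gd n - 1 := by
  rw [gd, show n * (n - 3) = (n - 1) * (n - 2) + -1 * 2 by ring,
    Int.add_mul_ediv_right _ _ two_ne_zero, Int.add_neg_one]

lemma two_mul_h0 {d : ℕ} (a : Fin d → ℤ) :
    2 * h0 a = ∑ i, (a i + 1) + ∑ i, |a i + 1| := by
  rw [h0, Finset.mul_sum, ← Finset.sum_add_distrib]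
  refine Finset.sum_congr rfl fun i _ => ?_
  split_ifs with h
  · rw [abs_of_nonneg (show 0 ≤ a i + 1 by omega)]; ring
  · rw [abs_of_nonpos (show a i + 1 ≤ 0 by omega)]; ring

lemma h0_eq_zero {d : ℕ} {a : Fin d → ℤ} (h : ∀ i, a i < 0) : h0 a = 0 :=
  Finset.sum_eq_zero fun i _ => if_neg (h i).not_ge

lemma IsBalanced.monotone_add_val {d : ℕ} {a : Fin d → ℤ} (hb : IsBalanced a) :
    Monotone fun i : Fin d => a i + (i : ℤ) := by
  cases d with
  | zero => exact fun i => i.elim0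
  | succ n =>
    refine Fin.monotone_iff_le_succ.mpr fun i => ?_
    have : a i.castSucc - a i.succ ≤ 1 := hb i.castSucc (by simp)
    simp only [Fin.val_castSucc, Fin.val_succ, Nat.cast_add, Nat.cast_one]
    linarith

lemma abs_sub_le_abs_sub_val {d : ℕ} {a : Fin d → ℤ} (ha : Antitone a)
    (hb : Monotone fun i : Fin d => a i + (i : ℤ)) (i k : Fin d) :
    |a i - a k| ≤ |(i : ℤ) - k| := by
  wlog h : i ≤ k generalizing i k
  · rw [abs_sub_comm, abs_sub_comm (i : ℤ)]
    exact this k i (le_of_not_ge h)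
  have h₁ : a k ≤ a i := ha h
  have h₂ : a i + i ≤ a k + k := hb h
  have h₃ : (i : ℤ) ≤ k := by exact_mod_cast h
  rw [abs_of_nonneg (sub_nonneg.mpr h₁), abs_of_nonpos (sub_nonpos.mpr h₃)]
  linarith

lemma exists_eq_of_le_of_le {d : ℕ} {a : Fin d → ℤ} (ha : Antitone a)
    (hb : Monotone fun i : Fin d => a i + (i : ℤ)) {c : ℤ} {i j : Fin d} (hi : c ≤ a i)
    (hj : a j ≤ c) : ∃ k, a k = c := by
  -- The first entry `≤ c` is also `≥ c`: it is either the first entry, or its predecessor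
  -- is `> c` and the drop from it is at most one.
  let s := Finset.univ.filter fun l => a l ≤ c
  have hs : s.Nonempty := ⟨j, by simpa [s] using hj⟩
  have hk : a (s.min' hs) ≤ c := by simpa [s] using s.min'_mem hs
  have hmin : ∀ l, a l ≤ c → s.min' hs ≤ l := fun l hl => s.min'_le l (by simpa [s] using hl)
  set k := s.min' hs
  refine ⟨k, le_antisymm hk ?_⟩
  rcases Nat.eq_zero_or_pos (k : ℕ) with hk0 | hkpos
  · exact hi.trans (ha (Fin.le_def.mpr (by omega)))
  · obtain ⟨p, hpk⟩ : ∃ p : Fin d, (p : ℕ) + 1 = k := ⟨⟨k - 1, by omega⟩, by simp; omega⟩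
    have hp : c < a p := not_le.mp fun h => absurd (Fin.le_def.mp (hmin p h)) (by omega)
    have := hb (show p ≤ k from Fin.le_def.mpr (by omega))
    simp only at this
    omega

lemma two_mul_sum_range_abs_sub {k d : ℕ} (hkd : k ≤ d) :
    2 * ∑ i ∈ Finset.range d, |(i : ℤ) - k| = k * (k + 1) + (d - 1 - k) * (d - k) := by
  induction k generalizing d with
  | zero =>
    clear hkd
    induction d with
    | zero => simp
    | succ d ih =>
      rw [Finset.sum_range_succ, mul_add, ih]
      push_cast
      simp only [sub_zero, Nat.abs_cast]
      ring
  | succ k ih =>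
    obtain ⟨d, rfl⟩ : ∃ d', d = d' + 1 := ⟨d - 1, by omega⟩
    rw [Finset.sum_range_succ', mul_add]
    push_cast
    simp only [add_sub_add_right_eq_sub, zero_sub, abs_neg]
    rw [ih (by omega), abs_of_nonneg (by positivity : (0 : ℤ) ≤ k + 1)]
    ring

lemma sum_abs_sub_val_le {d k : ℕ} (hk : 1 ≤ k) (hkd : k + 2 ≤ d) :
    ∑ i : Fin d, |(i : ℤ) - k| ≤ 1 + gd d := by
  have h := two_mul_sum_range_abs_sub (d := d) (k := k) (by omega)
  rw [← Fin.sum_univ_eq_sum_range (fun i => |(i : ℤ) - k|)] at h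
  have hg := two_mul_gd d
  nlinarith [mul_nonneg (by omega : (0 : ℤ) ≤ k - 1) (by omega : (0 : ℤ) ≤ d - 2 - k)]

theorem stmt_13_general (d : ℕ) (χ : ℤ) (hχ : 1 - gd (d : ℤ) ≤ χ)
    (a : Fin d → ℤ) (hs : IsSpectrum d χ a) (hb : IsBalanced a)
    (hneg : ∃ i, a i ≤ -2) :
    2 * h0 a ≤ 2 + χ + (d : ℤ) * ((d : ℤ) - 3) / 2 := by
  obtain ⟨ha, hsum⟩ := hs
  obtain ⟨j, hj⟩ := hneg
  rw [mul_sub_three_ediv_two]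
  by_cases hall : ∀ i, a i < 0
  · rw [h0_eq_zero hall]; linarith
  push Not at hall
  obtain ⟨i, hi⟩ := hall
  obtain ⟨k, hk⟩ := exists_eq_of_le_of_le ha hb.monotone_add_val
    (show -1 ≤ a i by omega) (show a j ≤ -1 by omega)
  have hik : i < k := ha.reflect_lt (by omega)
  have hkj : k < j := ha.reflect_lt (by omega)
  have hχsum : ∑ l, (a l + 1) = χ := by
    rw [Finset.sum_add_distrib, hsum]; simp
  calc 2 * h0 a = χ + ∑ l, |a l - a k| := by
        rw [two_mul_h0, hχsum, hk]; simp only [sub_neg_eq_add]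
    _ ≤ χ + ∑ l : Fin d, |(l : ℤ) - k| := by
        gcongr χ + ?_
        exact Finset.sum_le_sum fun l _ => abs_sub_le_abs_sub_val ha hb.monotone_add_val l k
    _ ≤ 2 + χ + (gd d - 1) := by
        have := sum_abs_sub_val_le (d := d) (k := k) (by omega) (by omega)
        linarith

/-- generalized Clifford theorem, combinatorial form: a balanced
spectrum of type `(d, χ)` with `χ ≥ 1 - g(d)` and some entry `≤ -2` satisfies
`2 h⁰(v) ≤ 2 + χ + d(d-3)/2`. -/
theorem stmt_13 (d : ℕ) (χ : ℤ) (hd : 1 ≤ d) (hχ : 1 - gd (d : ℤ) ≤ χ)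
    (a : Fin d → ℤ) (hs : IsSpectrum d χ a) (hb : IsBalanced a)
    (hneg : ∃ i, a i ≤ -2) :
    2 * h0 a ≤ 2 + χ + (d : ℤ) * ((d : ℤ) - 3) / 2 :=
  stmt_13_general d χ hχ a hs hb hneg
end

section
/- Let d, e, z, χ be integers with 1 ≤ e < d, z ≥ 0, and 2χ < d. Set χ′ = χ − d(d−3)/2 and define the rational number α by (χ′ + α)/d = (χ′ − z − 1 + g(d−e))/e. Then α = (e−d)·(d/2 − χ/e) − (d/e)·z, and α < 0. -/
/-! Clearing denominators in the wall equation makes `α` an explicit expression, whose two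
summands are `(e - d) * (d/2 - χ/e) < 0` (because `e < d` and `2χ < d ≤ d e`) and
`-(d/e) z ≤ 0`. -/

open Finset

theorem wall_parameter_eq {K : Type*} [Field K] [NeZero (2 : K)] {d e z χ α : K}
    (hd : d ≠ 0) (he : e ≠ 0)
    (hα : ((χ - d * (d - 3) / 2) + α) / d =
      ((χ - d * (d - 3) / 2) - z - 1 + (d - e - 1) * (d - e - 2) / 2) / e) :
    α = (e - d) * (d / 2 - χ / e) - (d / e) * z := by
  field_simp at hα ⊢
  linear_combination hα

theorem div_lt_half_of_two_mul_lt {K : Type*} [Field K] [LinearOrder K] [IsStrictOrderedRing K]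
    {d e χ : K} (he : 1 ≤ e) (hd : 0 < d) (hχ : 2 * χ < d) : χ / e < d / 2 := by
  have hχde : 2 * χ < d * e := by nlinarith
  rw [div_lt_div_iff₀ (by linarith) two_pos]
  linarith

theorem wall_parameter_neg {K : Type*} [Field K] [LinearOrder K] [IsStrictOrderedRing K]
    {d e z χ : K} (he : 1 ≤ e) (hed : e < d) (hz : 0 ≤ z) (hχ : 2 * χ < d) :
    (e - d) * (d / 2 - χ / e) - (d / e) * z < 0 := by
  have hd : 0 < d := by linarith
  have hmain : (e - d) * (d / 2 - χ / e) < 0 :=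
    mul_neg_of_neg_of_pos (by linarith) (sub_pos.2 (div_lt_half_of_two_mul_lt he hd hχ))
  have hz_term : 0 ≤ (d / e) * z := mul_nonneg (div_nonneg hd.le (by linarith)) hz
  linarith

/-- the wall parameter computation in Proposition 4.7. -/
theorem stmt_15 (d e z χ : ℤ) (he1 : 1 ≤ e) (hed : e < d) (hz : 0 ≤ z)
    (hχ : 2 * χ < d) (α : ℚ)
    (hα : (((χ : ℚ) - (d : ℚ) * ((d : ℚ) - 3) / 2) + α) / (d : ℚ) =
      (((χ : ℚ) - (d : ℚ) * ((d : ℚ) - 3) / 2) - (z : ℚ) - 1 +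
        ((d : ℚ) - (e : ℚ) - 1) * ((d : ℚ) - (e : ℚ) - 2) / 2) / (e : ℚ)) :
    α = ((e : ℚ) - (d : ℚ)) * ((d : ℚ) / 2 - (χ : ℚ) / (e : ℚ)) -
      ((d : ℚ) / (e : ℚ)) * (z : ℚ) ∧ α < 0 := by
  have he : (1 : ℚ) ≤ e := by exact_mod_cast he1
  have hed' : (e : ℚ) < d := by exact_mod_cast hed
  have hα_eq := wall_parameter_eq (by linarith) (by linarith) hα
  exact ⟨hα_eq, hα_eq ▸ wall_parameter_neg he hed' (by exact_mod_cast hz) (by exact_mod_cast hχ)⟩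
end

section
/- Let d, e, z, χ be integers with 1 ≤ e < d, z ≥ 0, and χ < d. Set χ′ = χ − d(d−2)/2 and define the rational number α by (χ′ + α)/d = (χ′ − z − 1 + g(d−e))/e. Then α = (e−d)·(d(e+1)/(2e) − χ/e) − (d/e)·z, and α < 0. -/
/-!
Clearing denominators in the slope equation gives
`α = (e - d) (d (e + 1) - 2χ) / (2e) - d z / e`. Since `χ < d` and `e ≥ 1`,
the numerator `d (e + 1) - 2χ` exceeds `d (e - 1) ≥ 0`, so the first term is a negative
factor `e - d` times a positive one, while `d z / e ≥ 0`.
-/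

open Finset

namespace WallParameter

variable {K : Type*}

theorem eq_of_slope_eq [Field K] [CharZero K] {d e z χ α : K} (hd : d ≠ 0) (he : e ≠ 0)
    (h : ((χ - d * (d - 2) / 2) + α) / d =
      ((χ - d * (d - 2) / 2) - z - 1 + (d - e - 1) * (d - e - 2) / 2) / e) :
    α = (e - d) * (d * (e + 1) / (2 * e) - χ / e) - d / e * z := by
  rw [div_eq_div_iff hd he] at h
  field_simp
  linear_combination 2 * h

theorem closed_form_neg [Field K] [LinearOrder K] [IsStrictOrderedRing K] {d e z χ : K}
    (he : 1 ≤ e) (hed : e < d) (hz : 0 ≤ z) (hχ : χ < d) :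
    (e - d) * (d * (e + 1) / (2 * e) - χ / e) - d / e * z < 0 := by
  have he0 : 0 < e := zero_lt_one.trans_le he
  have hd0 : 0 < d := he0.trans hed
  have hpos : 0 < d * (e + 1) / (2 * e) - χ / e := by
    rw [div_sub_div _ _ (by positivity) he0.ne']
    apply div_pos _ (by positivity)
    nlinarith [mul_nonneg hd0.le (sub_nonneg.2 he)]
  have hfirst : (e - d) * (d * (e + 1) / (2 * e) - χ / e) < 0 :=
    mul_neg_of_neg_of_pos (sub_neg.2 hed) hpos
  have hsecond : 0 ≤ d / e * z := by positivity
  linarith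

end WallParameter

/-- the wall parameter computation in Proposition 4.9. -/
theorem stmt_16 (d e z χ : ℤ) (he1 : 1 ≤ e) (hed : e < d) (hz : 0 ≤ z)
    (hχ : χ < d) (α : ℚ)
    (hα : (((χ : ℚ) - (d : ℚ) * ((d : ℚ) - 2) / 2) + α) / (d : ℚ) =
      (((χ : ℚ) - (d : ℚ) * ((d : ℚ) - 2) / 2) - (z : ℚ) - 1 +
        ((d : ℚ) - (e : ℚ) - 1) * ((d : ℚ) - (e : ℚ) - 2) / 2) / (e : ℚ)) :
    α = ((e : ℚ) - (d : ℚ)) * ((d : ℚ) * ((e : ℚ) + 1) / (2 * (e : ℚ)) -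
        (χ : ℚ) / (e : ℚ)) - ((d : ℚ) / (e : ℚ)) * (z : ℚ) ∧ α < 0 := by
  have he : (1 : ℚ) ≤ e := by exact_mod_cast he1
  have hedQ : (e : ℚ) < d := by exact_mod_cast hed
  have hα' := WallParameter.eq_of_slope_eq (by linarith) (by linarith) hα
  refine ⟨hα', hα' ▸ WallParameter.closed_form_neg he hedQ ?_ ?_⟩
  · exact_mod_cast hz
  · exact_mod_cast hχ
end
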